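/- On the free algebra ℂ⟨x_1,...,x_n⟩, the double bracket defined on generators by ⟪x_i, x_j⟫ = Σ_k (c_{ij}^k x_k ⊗ 1 − c_{ji}^k 1 ⊗ x_k) (extended as a derivation in the second argument and antisymmetrically) satisfies the double Jacobi identity if and only if the constants c_{ij}^k are the structure constants of an associative algebra, i.e., Σ_h c_{ij}^h c_{hk}^p = Σ_h c_{jk}^h c_{ih}^p for all i,j,k,p. -/
import Mathlib

set_option maxHeartbeats 1000000
set_option synthInstance.maxHeartbeats 400000
set_option maxRecDepth 4000
set_option linter.unusedSectionVars false



open TensorProduct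

noncomputable section

/-- Apply `B a` to the first tensor factor. -/
def Tfst (n : ℕ) (B : FreeAlgebra ℂ (Fin n) →ₗ[ℂ] FreeAlgebra ℂ (Fin n) →ₗ[ℂ]
      FreeAlgebra ℂ (Fin n) ⊗[ℂ] FreeAlgebra ℂ (Fin n)) (a : FreeAlgebra ℂ (Fin n)) :
    FreeAlgebra ℂ (Fin n) ⊗[ℂ] FreeAlgebra ℂ (Fin n) →ₗ[ℂ]
      FreeAlgebra ℂ (Fin n) ⊗[ℂ] (FreeAlgebra ℂ (Fin n) ⊗[ℂ] FreeAlgebra ℂ (Fin n)) :=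
  (TensorProduct.assoc ℂ _ _ _).toLinearMap ∘ₗ TensorProduct.map (B a) LinearMap.id

/-- The cyclic permutation `τ_{(123)} : u⊗v⊗w ↦ w⊗u⊗v`. -/
def cyc (n : ℕ) :
    FreeAlgebra ℂ (Fin n) ⊗[ℂ] (FreeAlgebra ℂ (Fin n) ⊗[ℂ] FreeAlgebra ℂ (Fin n)) →ₗ[ℂ]
      FreeAlgebra ℂ (Fin n) ⊗[ℂ] (FreeAlgebra ℂ (Fin n) ⊗[ℂ] FreeAlgebra ℂ (Fin n)) :=
  (TensorProduct.comm ℂ _ _).toLinearMap ∘ₗ (TensorProduct.assoc ℂ _ _ _).symm.toLinearMap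

namespace Aux3

variable {n : ℕ}

local notation "A" => FreeAlgebra ℂ (Fin n)
local notation "T2" => FreeAlgebra ℂ (Fin n) ⊗[ℂ] FreeAlgebra ℂ (Fin n)
local notation "T3" => FreeAlgebra ℂ (Fin n) ⊗[ℂ] (FreeAlgebra ℂ (Fin n) ⊗[ℂ] FreeAlgebra ℂ (Fin n))

variable (B : FreeAlgebra ℂ (Fin n) →ₗ[ℂ] FreeAlgebra ℂ (Fin n) →ₗ[ℂ]
      FreeAlgebra ℂ (Fin n) ⊗[ℂ] FreeAlgebra ℂ (Fin n))

lemma cyc_tmul (x y z : A) : cyc n (x ⊗ₜ[ℂ] (y ⊗ₜ[ℂ] z)) = z ⊗ₜ[ℂ] (x ⊗ₜ[ℂ] y) := by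
  simp [cyc]

lemma Tfst_tmul (a u v : A) :
    Tfst n B a (u ⊗ₜ[ℂ] v) = (TensorProduct.assoc ℂ _ _ _) (B a u ⊗ₜ[ℂ] v) := by
  simp [Tfst]

lemma cyc_cyc_cyc (t : T3) : cyc n (cyc n (cyc n t)) = t := by
  induction t using TensorProduct.induction_on with
  | zero => simp
  | tmul x yz =>
    induction yz using TensorProduct.induction_on with
    | zero => simp
    | tmul y z => simp [cyc_tmul]
    | add u v hu hv => simp [tmul_add, map_add, hu, hv]
  | add u v hu hv => simp [map_add, hu, hv]

/-- left-multiplication by `d` on the first factor -/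
def lM (d : A) : T3 →ₗ[ℂ] T3 :=
  TensorProduct.map (LinearMap.mulLeft ℂ d) LinearMap.id

/-- right-multiplication by `e` on the third factor -/
def rM (e : A) : T3 →ₗ[ℂ] T3 :=
  TensorProduct.map LinearMap.id (TensorProduct.map LinearMap.id (LinearMap.mulRight ℂ e))

@[simp] lemma lM_tmul (d x y z : A) : lM (n := n) d (x ⊗ₜ[ℂ] (y ⊗ₜ[ℂ] z)) = (d * x) ⊗ₜ[ℂ] (y ⊗ₜ[ℂ] z) := by
  simp [lM]

@[simp] lemma rM_tmul (e x y z : A) : rM (n := n) e (x ⊗ₜ[ℂ] (y ⊗ₜ[ℂ] z)) = x ⊗ₜ[ℂ] (y ⊗ₜ[ℂ] (z * e)) := by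
  simp [rM]
variable (hder : ∀ a b d : FreeAlgebra ℂ (Fin n), B a (b * d)
      = (b ⊗ₜ[ℂ] (1 : FreeAlgebra ℂ (Fin n))) * B a d
        + B a b * ((1 : FreeAlgebra ℂ (Fin n)) ⊗ₜ[ℂ] d))
variable (hskew : ∀ a b : FreeAlgebra ℂ (Fin n), B a b = - (TensorProduct.comm ℂ _ _) (B b a))

include hder in
lemma B_one_right (a : A) : B a 1 = 0 := by
  have h := hder a 1 1
  rw [mul_one] at h
  have h1 : ((1:A) ⊗ₜ[ℂ] (1:A)) = (1 : A ⊗[ℂ] A) := rfl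
  rw [h1, one_mul, mul_one] at h
  have := (add_eq_left (a := B a 1)).mp h.symm
  -- h : B a 1 = B a 1 + B a 1
  linear_combination (norm := module) -h

include hder hskew in
lemma B_one_left (a : A) : B 1 a = 0 := by
  rw [hskew, B_one_right B hder, map_zero, neg_zero]

lemma comm_lmul (d : A) (t : T2) :
    (TensorProduct.comm ℂ A A) ((d ⊗ₜ[ℂ] (1:A)) * t)
      = TensorProduct.map LinearMap.id (LinearMap.mulLeft ℂ d) ((TensorProduct.comm ℂ A A) t) := by
  induction t using TensorProduct.induction_on with
  | zero => simp
  | tmul p q => simp [Algebra.TensorProduct.tmul_mul_tmul]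
  | add u v hu hv => simp [mul_add, map_add, hu, hv]

lemma comm_rmul (e : A) (t : T2) :
    (TensorProduct.comm ℂ A A) (t * ((1:A) ⊗ₜ[ℂ] e))
      = TensorProduct.map (LinearMap.mulRight ℂ e) LinearMap.id ((TensorProduct.comm ℂ A A) t) := by
  induction t using TensorProduct.induction_on with
  | zero => simp
  | tmul p q => simp [Algebra.TensorProduct.tmul_mul_tmul]
  | add u v hu hv => simp [add_mul, map_add, hu, hv]

include hder hskew in
lemma B_mul_left (d e u : A) :
    B (d * e) u = TensorProduct.map LinearMap.id (LinearMap.mulLeft ℂ d) (B e u)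
      + TensorProduct.map (LinearMap.mulRight ℂ e) LinearMap.id (B d u) := by
  have h1 : B (d*e) u = - (TensorProduct.comm ℂ A A) (B u (d*e)) := hskew _ _
  rw [hder u d e, map_add, comm_lmul, comm_rmul] at h1
  have h2 : (TensorProduct.comm ℂ A A) (B u e) = - B e u := by
    rw [hskew e u]; simp
  have h3 : (TensorProduct.comm ℂ A A) (B u d) = - B d u := by
    rw [hskew d u]; simp
  rw [h2, h3] at h1
  rw [h1, map_neg, map_neg]; abel

/-- `Φ s (u ⊗ v) = assoc ((s * (1 ⊗ u)) ⊗ v)` -/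
def Phi (s : T2) : T2 →ₗ[ℂ] FreeAlgebra ℂ (Fin n) ⊗[ℂ] (FreeAlgebra ℂ (Fin n) ⊗[ℂ] FreeAlgebra ℂ (Fin n)) :=
  (TensorProduct.assoc ℂ A A A).toLinearMap ∘ₗ
    TensorProduct.map ((LinearMap.mulLeft ℂ s) ∘ₗ
      (Algebra.TensorProduct.includeRight : A →ₐ[ℂ] A ⊗[ℂ] A).toLinearMap) LinearMap.id

@[simp] lemma Phi_tmul (s : T2) (u v : A) :
    Phi (n := n) s (u ⊗ₜ[ℂ] v)
      = (TensorProduct.assoc ℂ A A A) ((s * ((1:A) ⊗ₜ[ℂ] u)) ⊗ₜ[ℂ] v) := by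
  simp [Phi]

/-- `Psi w (u ⊗ v) = v ⊗ ((u ⊗ 1) * w)` (reassociated). -/
def Psi (w : T2) : T2 →ₗ[ℂ] FreeAlgebra ℂ (Fin n) ⊗[ℂ] (FreeAlgebra ℂ (Fin n) ⊗[ℂ] FreeAlgebra ℂ (Fin n)) :=
  (TensorProduct.comm ℂ (A ⊗[ℂ] A) A).toLinearMap ∘ₗ
    TensorProduct.map ((LinearMap.mulRight ℂ w) ∘ₗ
      (Algebra.TensorProduct.includeLeft : A →ₐ[ℂ] A ⊗[ℂ] A).toLinearMap) LinearMap.id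

@[simp] lemma Psi_tmul (w : T2) (u v : A) :
    Psi (n := n) w (u ⊗ₜ[ℂ] v) = v ⊗ₜ[ℂ] ((u ⊗ₜ[ℂ] (1:A)) * w) := by
  simp [Psi]

lemma Phi_zero (w : T2) : Phi (n := n) (0 : T2) w = 0 := by
  induction w using TensorProduct.induction_on with
  | zero => simp
  | tmul p q => simp
  | add u v hu hv => simp [map_add, hu, hv]

lemma Phi_add (s s' w : T2) : Phi (n := n) (s + s') w = Phi s w + Phi s' w := by
  induction w using TensorProduct.induction_on with
  | zero => simp
  | tmul p q => simp [add_mul, add_tmul]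
  | add u v hu hv =>
    simp only [map_add, hu, hv]; abel

lemma Psi_comm_eq_Phi (s w : T2) : Psi (n := n) w ((TensorProduct.comm ℂ A A) s) = Phi s w := by
  induction s using TensorProduct.induction_on with
  | zero => simp [Phi_zero]
  | tmul x y =>
    induction w using TensorProduct.induction_on with
    | zero => simp
    | tmul p q => simp [Algebra.TensorProduct.tmul_mul_tmul, mul_comm]
    | add u v hu hv =>
      simp only [map_add, mul_add, tmul_add, comm_tmul, Psi_tmul] at hu hv ⊢
      rw [hu, hv]
  | add u v hu hv => simp [map_add, Phi_add, hu, hv]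

-- pure-tensor level lemmas
lemma P1 (d v : A) (s : T2) :
    (TensorProduct.assoc ℂ A A A) (((d ⊗ₜ[ℂ] (1:A)) * s) ⊗ₜ[ℂ] v)
      = lM d ((TensorProduct.assoc ℂ A A A) (s ⊗ₜ[ℂ] v)) := by
  induction s using TensorProduct.induction_on with
  | zero => simp
  | tmul p q => simp
  | add x y hx hy => simp only [mul_add, add_tmul, map_add, hx, hy]

lemma P3 (e v : A) (w : T2) :
    (TensorProduct.assoc ℂ A A A) (w ⊗ₜ[ℂ] (v * e))
      = rM e ((TensorProduct.assoc ℂ A A A) (w ⊗ₜ[ℂ] v)) := by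
  induction w using TensorProduct.induction_on with
  | zero => simp
  | tmul p q => simp
  | add x y hx hy => simp only [add_tmul, map_add, hx, hy]

lemma P4 (d v : A) (w : T2) :
    cyc n ((TensorProduct.assoc ℂ A A A) (w ⊗ₜ[ℂ] (d * v)))
      = lM d (cyc n ((TensorProduct.assoc ℂ A A A) (w ⊗ₜ[ℂ] v))) := by
  induction w using TensorProduct.induction_on with
  | zero => simp
  | tmul p q => simp [cyc_tmul]
  | add x y hx hy => simp only [add_tmul, map_add, hx, hy]

lemma P6 (u v : A) (w : T2) :
    cyc n ((TensorProduct.assoc ℂ A A A) (((u ⊗ₜ[ℂ] (1:A)) * w) ⊗ₜ[ℂ] v))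
      = Psi w (u ⊗ₜ[ℂ] v) := by
  induction w using TensorProduct.induction_on with
  | zero => simp
  | tmul p q => simp [Algebra.TensorProduct.tmul_mul_tmul, cyc_tmul]
  | add x y hx hy =>
    simp only [mul_add, add_tmul, map_add, hx, hy, Psi_tmul, tmul_add]

lemma P7 (e v : A) (w : T2) :
    cyc n ((TensorProduct.assoc ℂ A A A) ((w * ((1:A) ⊗ₜ[ℂ] e)) ⊗ₜ[ℂ] v))
      = rM e (cyc n ((TensorProduct.assoc ℂ A A A) (w ⊗ₜ[ℂ] v))) := by
  induction w using TensorProduct.induction_on with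
  | zero => simp
  | tmul p q => simp [Algebra.TensorProduct.tmul_mul_tmul, cyc_tmul]
  | add x y hx hy => simp only [add_mul, add_tmul, map_add, hx, hy]

lemma P8 (d v : A) (w : T2) :
    cyc n (cyc n ((TensorProduct.assoc ℂ A A A)
      ((TensorProduct.map LinearMap.id (LinearMap.mulLeft ℂ d) w) ⊗ₜ[ℂ] v)))
      = lM d (cyc n (cyc n ((TensorProduct.assoc ℂ A A A) (w ⊗ₜ[ℂ] v)))) := by
  induction w using TensorProduct.induction_on with
  | zero => simp
  | tmul p q => simp [cyc_tmul]
  | add x y hx hy => simp only [map_add, add_tmul, hx, hy]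

lemma P9 (e v : A) (w : T2) :
    cyc n (cyc n ((TensorProduct.assoc ℂ A A A)
      ((TensorProduct.map (LinearMap.mulRight ℂ e) LinearMap.id w) ⊗ₜ[ℂ] v)))
      = rM e (cyc n (cyc n ((TensorProduct.assoc ℂ A A A) (w ⊗ₜ[ℂ] v)))) := by
  induction w using TensorProduct.induction_on with
  | zero => simp
  | tmul p q => simp [cyc_tmul]
  | add x y hx hy => simp only [map_add, add_tmul, hx, hy]

include hder in
lemma S1 (a d : A) (t : T2) :
    Tfst n B a ((d ⊗ₜ[ℂ] (1:A)) * t)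
      = lM d (Tfst n B a t) + Phi (B a d) t := by
  induction t using TensorProduct.induction_on with
  | zero => simp [Phi]
  | tmul u v =>
    rw [Algebra.TensorProduct.tmul_mul_tmul, one_mul v, Tfst_tmul, hder a d u,
      add_tmul, map_add, P1, Phi_tmul, Tfst_tmul]
  | add x y hx hy =>
    simp only [mul_add, map_add, hx, hy]; abel

include hder in
lemma S2 (a e : A) (t : T2) :
    Tfst n B a (t * ((1:A) ⊗ₜ[ℂ] e)) = rM e (Tfst n B a t) := by
  induction t using TensorProduct.induction_on with
  | zero => simp
  | tmul u v =>
    rw [Algebra.TensorProduct.tmul_mul_tmul, mul_one u, Tfst_tmul, P3, Tfst_tmul]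
  | add x y hx hy => simp only [add_mul, map_add, hx, hy]

lemma S3 (b d : A) (t : T2) :
    cyc n (Tfst n B b (TensorProduct.map LinearMap.id (LinearMap.mulLeft ℂ d) t))
      = lM d (cyc n (Tfst n B b t)) := by
  induction t using TensorProduct.induction_on with
  | zero => simp
  | tmul u v =>
    rw [map_tmul, LinearMap.id_coe, id_eq, LinearMap.mulLeft_apply, Tfst_tmul, P4, Tfst_tmul]
  | add x y hx hy => simp only [map_add, hx, hy]

include hder in
lemma S4 (b e : A) (t : T2) :
    cyc n (Tfst n B b (TensorProduct.map (LinearMap.mulRight ℂ e) LinearMap.id t))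
      = rM e (cyc n (Tfst n B b t)) + Psi (B b e) t := by
  induction t using TensorProduct.induction_on with
  | zero => simp [Psi]
  | tmul u v =>
    rw [map_tmul, LinearMap.id_coe, id_eq, LinearMap.mulRight_apply, Tfst_tmul, hder b u e,
      add_tmul, map_add, map_add, P6, P7, Tfst_tmul]
    abel
  | add x y hx hy =>
    simp only [map_add, hx, hy]; abel

include hder hskew in
lemma S5 (d e : A) (t : T2) :
    cyc n (cyc n (Tfst n B (d * e) t))
      = lM d (cyc n (cyc n (Tfst n B e t))) + rM e (cyc n (cyc n (Tfst n B d t))) := by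
  induction t using TensorProduct.induction_on with
  | zero => simp
  | tmul u v =>
    rw [Tfst_tmul, B_mul_left B hder hskew d e u, add_tmul, map_add, map_add, map_add,
      P8, P9, Tfst_tmul, Tfst_tmul]
  | add x y hx hy =>
    simp only [map_add, hx, hy]; abel

/-- The Jacobi expression. -/
def J (a b d : A) : FreeAlgebra ℂ (Fin n) ⊗[ℂ] (FreeAlgebra ℂ (Fin n) ⊗[ℂ] FreeAlgebra ℂ (Fin n)) :=
  Tfst n B a (B b d) + cyc n (Tfst n B b (B d a)) + cyc n (cyc n (Tfst n B d (B a b)))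

include hder hskew in
lemma Jmul (a b d e : A) :
    J B a b (d * e) = lM d (J B a b e) + rM e (J B a b d) := by
  have t1 : Tfst n B a (B b (d * e))
      = lM d (Tfst n B a (B b e)) + Phi (B a d) (B b e)
        + rM e (Tfst n B a (B b d)) := by
    rw [hder b d e, map_add, S1 B hder, S2 B hder]
  have t2 : cyc n (Tfst n B b (B (d * e) a))
      = lM d (cyc n (Tfst n B b (B e a))) + rM e (cyc n (Tfst n B b (B d a)))
        + Psi (B b e) (B d a) := by
    rw [B_mul_left B hder hskew d e a, map_add, map_add, S3, S4 B hder]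
    abel
  have t3 := S5 B hder hskew d e (B a b)
  have cancel : Phi (B a d) (B b e) + Psi (B b e) (B d a) = 0 := by
    rw [hskew d a, map_neg, ← Psi_comm_eq_Phi]
    abel
  unfold J
  rw [t1, t2, t3]
  have expand : lM d (Tfst n B a (B b e) + cyc n (Tfst n B b (B e a))
        + cyc n (cyc n (Tfst n B e (B a b))))
      = lM d (Tfst n B a (B b e)) + lM d (cyc n (Tfst n B b (B e a)))
        + lM d (cyc n (cyc n (Tfst n B e (B a b)))) := by
    simp only [map_add]
  have expand2 : rM e (Tfst n B a (B b d) + cyc n (Tfst n B b (B d a))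
        + cyc n (cyc n (Tfst n B d (B a b))))
      = rM e (Tfst n B a (B b d)) + rM e (cyc n (Tfst n B b (B d a)))
        + rM e (cyc n (cyc n (Tfst n B d (B a b)))) := by
    simp only [map_add]
  rw [expand, expand2]
  linear_combination (norm := abel) cancel

lemma Jcyc (a b d : A) : J B a b d = cyc n (J B b d a) := by
  unfold J
  rw [map_add, map_add, cyc_cyc_cyc]
  abel

lemma Jadd3 (a b d d' : A) : J B a b (d + d') = J B a b d + J B a b d' := by
  unfold J
  have h1 : B (d + d') a = B d a + B d' a := by rw [map_add, LinearMap.add_apply]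
  have h2 : Tfst n B (d + d') (B a b) = Tfst n B d (B a b) + Tfst n B d' (B a b) := by
    unfold Tfst
    rw [map_add]
    simp only [LinearMap.coe_comp, Function.comp_apply, TensorProduct.map_add_left,
      LinearMap.add_apply, map_add]
  rw [map_add, h1, map_add, map_add, h2, map_add]
  simp only [map_add]
  abel

include hder hskew in
lemma B_alg_right (a : A) (r : ℂ) : B a (algebraMap ℂ (FreeAlgebra ℂ (Fin n)) r) = 0 := by
  rw [Algebra.algebraMap_eq_smul_one, map_smul, B_one_right B hder, smul_zero]

include hder hskew in
lemma B_alg_left (a : A) (r : ℂ) : B (algebraMap ℂ (FreeAlgebra ℂ (Fin n)) r) a = 0 := by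
  rw [hskew, B_alg_right B hder hskew, map_zero, neg_zero]

include hder hskew in
lemma Tfst_alg (r : ℂ) (t : T2) : Tfst n B (algebraMap ℂ (FreeAlgebra ℂ (Fin n)) r) t = 0 := by
  induction t using TensorProduct.induction_on with
  | zero => simp
  | tmul u v => rw [Tfst_tmul, B_alg_left B hder hskew, zero_tmul, map_zero]
  | add x y hx hy => rw [map_add, hx, hy, add_zero]

include hder hskew in
lemma Jalg3 (a b : A) (r : ℂ) : J B a b (algebraMap ℂ (FreeAlgebra ℂ (Fin n)) r) = 0 := by
  unfold J
  rw [B_alg_right B hder hskew, B_alg_left B hder hskew, Tfst_alg B hder hskew, map_zero,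
    map_zero, map_zero, map_zero]
  simp

variable (c : Fin n → Fin n → Fin n → ℂ)
variable (hgen : ∀ i j : Fin n, B (FreeAlgebra.ι ℂ i) (FreeAlgebra.ι ℂ j)
      = ∑ k : Fin n, (c i j k • (FreeAlgebra.ι ℂ k ⊗ₜ[ℂ] (1 : FreeAlgebra ℂ (Fin n)))
          - c j i k • ((1 : FreeAlgebra ℂ (Fin n)) ⊗ₜ[ℂ] FreeAlgebra.ι ℂ k)))

include hder hgen in
lemma Jgen (i j k : Fin n) :
    J B (FreeAlgebra.ι ℂ i) (FreeAlgebra.ι ℂ j) (FreeAlgebra.ι ℂ k)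
      = ((∑ h : Fin n, ∑ p : Fin n, (c j k h * c i h p) •
              (FreeAlgebra.ι ℂ p ⊗ₜ[ℂ] ((1:A) ⊗ₜ[ℂ] (1:A))))
          - (∑ h : Fin n, ∑ p : Fin n, (c i j h * c h k p) •
              (FreeAlgebra.ι ℂ p ⊗ₜ[ℂ] ((1:A) ⊗ₜ[ℂ] (1:A)))))
        + ((∑ h : Fin n, ∑ p : Fin n, (c k i h * c j h p) •
              ((1:A) ⊗ₜ[ℂ] (FreeAlgebra.ι ℂ p ⊗ₜ[ℂ] (1:A))))
          - (∑ h : Fin n, ∑ p : Fin n, (c j k h * c h i p) •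
              ((1:A) ⊗ₜ[ℂ] (FreeAlgebra.ι ℂ p ⊗ₜ[ℂ] (1:A)))))
        + ((∑ h : Fin n, ∑ p : Fin n, (c i j h * c k h p) •
              ((1:A) ⊗ₜ[ℂ] ((1:A) ⊗ₜ[ℂ] FreeAlgebra.ι ℂ p)))
          - (∑ h : Fin n, ∑ p : Fin n, (c k i h * c h j p) •
              ((1:A) ⊗ₜ[ℂ] ((1:A) ⊗ₜ[ℂ] FreeAlgebra.ι ℂ p)))) := by
  unfold J
  rw [hgen j k, hgen k i, hgen i j]
  simp only [map_sum, map_sub, map_smul, Tfst_tmul, hgen, B_one_right B hder,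
    zero_tmul, map_zero, sum_tmul, sub_tmul, ← smul_tmul', assoc_tmul, cyc_tmul,
    smul_sub, sub_smul, smul_smul, Finset.smul_sum, smul_zero, Finset.sum_sub_distrib,
    tmul_smul, Finset.sum_const_zero, sub_zero, Finset.sum_add_distrib]
  abel

lemma sum_swap_smul {M : Type*} [AddCommMonoid M] [Module ℂ M]
    (α : Fin n → Fin n → ℂ) (E : Fin n → M) :
    ∑ h : Fin n, ∑ p : Fin n, α h p • E p = ∑ p : Fin n, (∑ h : Fin n, α h p) • E p := by
  rw [Finset.sum_comm]
  simp [Finset.sum_smul]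

include hder hgen in
lemma Jgen_zero
    (hc : ∀ i j k p : Fin n, ∑ h : Fin n, c i j h * c h k p = ∑ h : Fin n, c j k h * c i h p)
    (i j k : Fin n) :
    J B (FreeAlgebra.ι ℂ i) (FreeAlgebra.ι ℂ j) (FreeAlgebra.ι ℂ k) = 0 := by
  rw [Jgen B hder c hgen i j k]
  rw [sum_swap_smul, sum_swap_smul, sum_swap_smul, sum_swap_smul, sum_swap_smul, sum_swap_smul]
  have e1 : (∑ p : Fin n, (∑ h : Fin n, c j k h * c i h p) •
        (FreeAlgebra.ι ℂ p ⊗ₜ[ℂ] ((1:A) ⊗ₜ[ℂ] (1:A))))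
      = ∑ p : Fin n, (∑ h : Fin n, c i j h * c h k p) •
        (FreeAlgebra.ι ℂ p ⊗ₜ[ℂ] ((1:A) ⊗ₜ[ℂ] (1:A))) := by
    refine Finset.sum_congr rfl fun p _ => ?_
    rw [hc i j k p]
  have e2 : (∑ p : Fin n, (∑ h : Fin n, c k i h * c j h p) •
        ((1:A) ⊗ₜ[ℂ] (FreeAlgebra.ι ℂ p ⊗ₜ[ℂ] (1:A))))
      = ∑ p : Fin n, (∑ h : Fin n, c j k h * c h i p) •
        ((1:A) ⊗ₜ[ℂ] (FreeAlgebra.ι ℂ p ⊗ₜ[ℂ] (1:A))) := by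
    refine Finset.sum_congr rfl fun p _ => ?_
    rw [hc j k i p]
  have e3 : (∑ p : Fin n, (∑ h : Fin n, c i j h * c k h p) •
        ((1:A) ⊗ₜ[ℂ] ((1:A) ⊗ₜ[ℂ] FreeAlgebra.ι ℂ p)))
      = ∑ p : Fin n, (∑ h : Fin n, c k i h * c h j p) •
        ((1:A) ⊗ₜ[ℂ] ((1:A) ⊗ₜ[ℂ] FreeAlgebra.ι ℂ p)) := by
    refine Finset.sum_congr rfl fun p _ => ?_
    rw [hc k i j p]
  rw [e1, e2, e3]
  abel

lemma Jcyc2 (a b d : A) : J B a b d = cyc n (cyc n (J B d a b)) := by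
  rw [Jcyc B a b d, Jcyc B b d a]

include hder hskew hgen in
lemma Jzero_all
    (hc : ∀ i j k p : Fin n, ∑ h : Fin n, c i j h * c h k p = ∑ h : Fin n, c j k h * c i h p)
    (a b d : A) : J B a b d = 0 := by
  have L1 : ∀ (i j : Fin n) (d : A), J B (FreeAlgebra.ι ℂ i) (FreeAlgebra.ι ℂ j) d = 0 := by
    intro i j d
    induction d with
    | grade0 r => exact Jalg3 B hder hskew _ _ r
    | grade1 k => exact Jgen_zero B hder c hgen hc i j k
    | mul x y hx hy => rw [Jmul B hder hskew, hx, hy, map_zero, map_zero, add_zero]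
    | add x y hx hy => rw [Jadd3, hx, hy, add_zero]
  have L2 : ∀ (i : Fin n) (b d : A), J B (FreeAlgebra.ι ℂ i) b d = 0 := by
    intro i b
    induction b with
    | grade0 r =>
      intro d
      rw [Jcyc2, Jalg3 B hder hskew, map_zero, map_zero]
    | grade1 j => exact L1 i j
    | mul x y hx hy =>
      intro d
      have h1 : J B d (FreeAlgebra.ι ℂ i) x = 0 := by rw [Jcyc, hx, map_zero]
      have h2 : J B d (FreeAlgebra.ι ℂ i) y = 0 := by rw [Jcyc, hy, map_zero]
      rw [Jcyc2, Jmul B hder hskew, h1, h2, map_zero, map_zero, add_zero, map_zero, map_zero]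
    | add x y hx hy =>
      intro d
      have h1 : J B d (FreeAlgebra.ι ℂ i) x = 0 := by rw [Jcyc, hx, map_zero]
      have h2 : J B d (FreeAlgebra.ι ℂ i) y = 0 := by rw [Jcyc, hy, map_zero]
      rw [Jcyc2, Jadd3, h1, h2, add_zero, map_zero, map_zero]
  induction a with
  | grade0 r =>
    rw [Jcyc, Jalg3 B hder hskew, map_zero]
  | grade1 i => exact L2 i b d
  | mul x y hx hy =>
    have h1 : J B b d x = 0 := by rw [Jcyc2, hx, map_zero, map_zero]
    have h2 : J B b d y = 0 := by rw [Jcyc2, hy, map_zero, map_zero]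
    rw [Jcyc, Jmul B hder hskew, h1, h2, map_zero, map_zero, add_zero, map_zero]
  | add x y hx hy =>
    have h1 : J B b d x = 0 := by rw [Jcyc2, hx, map_zero, map_zero]
    have h2 : J B b d y = 0 := by rw [Jcyc2, hy, map_zero, map_zero]
    rw [Jcyc, Jadd3, h1, h2, add_zero, map_zero]

def eps : FreeAlgebra ℂ (Fin n) →ₐ[ℂ] ℂ := FreeAlgebra.lift ℂ (fun _ => 0)

def phi (p : Fin n) : FreeAlgebra ℂ (Fin n) →ₐ[ℂ] ℂ :=
  FreeAlgebra.lift ℂ (fun q => if q = p then 1 else 0)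

def Theta (p : Fin n) :
    FreeAlgebra ℂ (Fin n) ⊗[ℂ] (FreeAlgebra ℂ (Fin n) ⊗[ℂ] FreeAlgebra ℂ (Fin n)) →ₗ[ℂ] ℂ :=
  (TensorProduct.lid ℂ ℂ).toLinearMap ∘ₗ TensorProduct.map (phi p).toLinearMap
    ((TensorProduct.lid ℂ ℂ).toLinearMap ∘ₗ TensorProduct.map (eps (n := n)).toLinearMap
      (eps (n := n)).toLinearMap)

@[simp] lemma Theta_tmul (p : Fin n) (x y z : A) :
    Theta p (x ⊗ₜ[ℂ] (y ⊗ₜ[ℂ] z)) = phi p x * (eps y * eps z) := by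
  simp [Theta, smul_eq_mul]

@[simp] lemma eps_one : eps (n := n) 1 = 1 := map_one _
@[simp] lemma eps_iota (q : Fin n) : eps (FreeAlgebra.ι ℂ q) = 0 := by
  simp [eps]
@[simp] lemma phi_one (p : Fin n) : phi p (1 : A) = 1 := map_one _
@[simp] lemma phi_iota (p q : Fin n) : phi p (FreeAlgebra.ι ℂ q) = if q = p then 1 else 0 := by
  simp [phi]

include hder hgen in
lemma extract (i j k p : Fin n)
    (hz : J B (FreeAlgebra.ι ℂ i) (FreeAlgebra.ι ℂ j) (FreeAlgebra.ι ℂ k) = 0) :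
    ∑ h : Fin n, c i j h * c h k p = ∑ h : Fin n, c j k h * c i h p := by
  have h := congrArg (Theta (n := n) p) ((Jgen B hder c hgen i j k).symm.trans hz)
  simp only [map_sum, map_sub, map_add, map_smul, map_zero, Theta_tmul, eps_one, eps_iota,
    phi_one, phi_iota, mul_one, mul_zero, zero_mul, smul_eq_mul, one_mul,
    Finset.sum_const_zero, sub_zero, add_zero, zero_add, mul_ite, mul_one,
    Finset.sum_ite_eq', Finset.mem_univ, if_true] at h
  exact (sub_eq_zero.mp h).symm

end Aux3

/-- The linear double bracket on `ℂ⟨x_1,…,x_n⟩` with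
`⟪x_i,x_j⟫ = Σ_k (c_{ij}^k x_k ⊗ 1 − c_{ji}^k 1 ⊗ x_k)` satisfies the double Jacobi
identity iff the `c_{ij}^k` are structure constants of an associative algebra. -/
theorem stmt_3 (n : ℕ) (c : Fin n → Fin n → Fin n → ℂ)
    (B : FreeAlgebra ℂ (Fin n) →ₗ[ℂ] FreeAlgebra ℂ (Fin n) →ₗ[ℂ]
      FreeAlgebra ℂ (Fin n) ⊗[ℂ] FreeAlgebra ℂ (Fin n))
    (hder : ∀ a b d : FreeAlgebra ℂ (Fin n), B a (b * d)
      = (b ⊗ₜ[ℂ] (1 : FreeAlgebra ℂ (Fin n))) * B a d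
        + B a b * ((1 : FreeAlgebra ℂ (Fin n)) ⊗ₜ[ℂ] d))
    (hskew : ∀ a b : FreeAlgebra ℂ (Fin n), B a b = - (TensorProduct.comm ℂ _ _) (B b a))
    (hgen : ∀ i j : Fin n, B (FreeAlgebra.ι ℂ i) (FreeAlgebra.ι ℂ j)
      = ∑ k : Fin n, (c i j k • (FreeAlgebra.ι ℂ k ⊗ₜ[ℂ] (1 : FreeAlgebra ℂ (Fin n)))
          - c j i k • ((1 : FreeAlgebra ℂ (Fin n)) ⊗ₜ[ℂ] FreeAlgebra.ι ℂ k))) :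
    (∀ a b d : FreeAlgebra ℂ (Fin n),
        Tfst n B a (B b d) + cyc n (Tfst n B b (B d a))
          + cyc n (cyc n (Tfst n B d (B a b))) = 0)
    ↔ (∀ i j k p : Fin n, ∑ h : Fin n, c i j h * c h k p = ∑ h : Fin n, c j k h * c i h p) := by
  constructor
  · intro hJ i j k p
    exact Aux3.extract B hder c hgen i j k p (hJ _ _ _)
  · intro hc a b d
    exact Aux3.Jzero_all B hder hskew c hgen hc a b d


end
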